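/- arXiv:2111.07293 — 3 statements merged into one kernel-verified Lean document; each statement's English description precedes it below -/
import Mathlib

section
/- Let γ ∈ (0,1), T > 0 and c > 0. Suppose f : [0,T] → [0,∞) is Lebesgue-integrable on [0,T] and satisfies f(t) ≤ c + c ∫₀^t (t−r)^{−γ} f(r) dr for all t ∈ [0,T]. Then there exist constants c₁, c₂ > 0, depending only on c, γ and T, such that f(t) ≤ c₁ e^{c₂ t} for all t ∈ [0,T]. -/
open MeasureTheory Set


lemma sg_lintA' (β s t : ℝ) (hβ : 0 < β) (hst : s ≤ t) :
    ∫⁻ r in Set.Ioc s t, ENNReal.ofReal ((r - s) ^ (β - 1)) = ENNReal.ofReal ((t - s) ^ β / β) := by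
  have hInt : IntervalIntegrable (fun r => (r - s) ^ (β - 1)) volume s t := by
    have h := (intervalIntegral.intervalIntegrable_rpow' (a := 0) (b := t - s)
      (r := β - 1) (by linarith)).comp_sub_right s
    simpa using h
  have hnn : (0 : ℝ → ℝ) ≤ᶠ[ae (volume.restrict (Set.Ioc s t))] fun r => (r - s) ^ (β - 1) :=
    MeasureTheory.ae_restrict_of_forall_mem measurableSet_Ioc
      (fun r hr => Real.rpow_nonneg (by simp at hr; linarith [hr.1]) _)
  have hval : ∫ r in Set.Ioc s t, (r - s) ^ (β - 1) = (t - s) ^ β / β := by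
    rw [← intervalIntegral.integral_of_le hst,
      intervalIntegral.integral_comp_sub_right (fun x => x ^ (β - 1)) s,
      integral_rpow (Or.inl (by linarith))]
    rw [sub_self, Real.zero_rpow (by linarith : β - 1 + 1 ≠ 0)]
    ring_nf
  rw [← hval, ofReal_integral_eq_lintegral_ofReal hInt.1 hnn]

lemma sg_lintA (α s t : ℝ) (hα : 0 < α) (hst : s ≤ t) :
    ∫⁻ r in Set.Ioc s t, ENNReal.ofReal ((t - r) ^ (α - 1)) = ENNReal.ofReal ((t - s) ^ α / α) := by
  have hInt : IntervalIntegrable (fun r => (t - r) ^ (α - 1)) volume s t := by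
    have h := (intervalIntegral.intervalIntegrable_rpow' (a := 0) (b := t - s)
      (r := α - 1) (by linarith)).comp_sub_left t
    simpa using h.symm
  have hnn : (0 : ℝ → ℝ) ≤ᶠ[ae (volume.restrict (Set.Ioc s t))] fun r => (t - r) ^ (α - 1) :=
    MeasureTheory.ae_restrict_of_forall_mem measurableSet_Ioc
      (fun r hr => Real.rpow_nonneg (by simp at hr; linarith [hr.2]) _)
  have hval : ∫ r in Set.Ioc s t, (t - r) ^ (α - 1) = (t - s) ^ α / α := by
    rw [← intervalIntegral.integral_of_le hst,
      intervalIntegral.integral_comp_sub_left (fun x => x ^ (α - 1)) t,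
      integral_rpow (Or.inl (by linarith))]
    rw [sub_self, Real.zero_rpow (by linarith : α - 1 + 1 ≠ 0)]
    ring_nf
  rw [← hval, ofReal_integral_eq_lintegral_ofReal hInt.1 hnn]

lemma sg_lintB (α β s t : ℝ) (hα : 0 < α) (hα1 : α ≤ 1) (hβ : 0 < β) (hβ1 : β ≤ 1)
    (hst : s < t) :
    ∫⁻ r in Set.Ioo s t, ENNReal.ofReal ((t - r) ^ (α - 1) * (r - s) ^ (β - 1))
      ≤ ENNReal.ofReal ((2 / α + 2 / β) * (t - s) ^ (α + β - 1)) := by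
  set m := (s + t) / 2 with hm
  have hsm : s < m := by simp [hm]; linarith
  have hmt : m < t := by simp [hm]; linarith
  have hms : m - s = (t - s) / 2 := by simp [hm]; ring
  have htm : t - m = (t - s) / 2 := by simp [hm]; ring
  have hx : (0:ℝ) < (t - s) / 2 := by linarith
  have hsub : Set.Ioo s t ⊆ Set.Ioc s m ∪ Set.Ioc m t := by
    intro r hr; rcases le_or_gt r m with h | h
    · exact Or.inl ⟨hr.1, h⟩
    · exact Or.inr ⟨h, hr.2.le⟩
  calc ∫⁻ r in Set.Ioo s t, ENNReal.ofReal ((t - r) ^ (α - 1) * (r - s) ^ (β - 1))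
      ≤ ∫⁻ r in Set.Ioc s m ∪ Set.Ioc m t,
          ENNReal.ofReal ((t - r) ^ (α - 1) * (r - s) ^ (β - 1)) := lintegral_mono_set hsub
    _ ≤ (∫⁻ r in Set.Ioc s m, ENNReal.ofReal ((t - r) ^ (α - 1) * (r - s) ^ (β - 1)))
        + ∫⁻ r in Set.Ioc m t, ENNReal.ofReal ((t - r) ^ (α - 1) * (r - s) ^ (β - 1)) :=
        lintegral_union_le _ _ _
    _ ≤ ENNReal.ofReal (((t - s)/2) ^ (α - 1)) * ENNReal.ofReal ((m - s) ^ β / β)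
        + ENNReal.ofReal (((t - s)/2) ^ (β - 1)) * ENNReal.ofReal ((t - m) ^ α / α) := by
        gcongr
        · rw [← sg_lintA' β s m hβ hsm.le, ← lintegral_const_mul' _ _ ENNReal.ofReal_ne_top]
          apply setLIntegral_mono (by fun_prop)
          intro r hr
          rw [← ENNReal.ofReal_mul (by positivity)]
          apply ENNReal.ofReal_le_ofReal
          apply mul_le_mul_of_nonneg_right _ (Real.rpow_nonneg (by linarith [hr.1]) _)
          apply Real.rpow_le_rpow_of_nonpos hx (by linarith [hr.2]) (by linarith)
        · rw [← sg_lintA α m t hα hmt.le, ← lintegral_const_mul' _ _ ENNReal.ofReal_ne_top]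
          apply setLIntegral_mono (by fun_prop)
          intro r hr
          rw [mul_comm ((t-r) ^ (α-1)), ← ENNReal.ofReal_mul (by positivity)]
          apply ENNReal.ofReal_le_ofReal
          apply mul_le_mul_of_nonneg_right _ (Real.rpow_nonneg (by linarith [hr.2]) _)
          apply Real.rpow_le_rpow_of_nonpos hx (by linarith [hr.1]) (by linarith)
    _ ≤ ENNReal.ofReal ((2 / α + 2 / β) * (t - s) ^ (α + β - 1)) := by
        rw [hms, htm, ← ENNReal.ofReal_mul (Real.rpow_nonneg hx.le _),
          ← ENNReal.ofReal_mul (Real.rpow_nonneg hx.le _), ← ENNReal.ofReal_add (by positivity) (by positivity)]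
        apply ENNReal.ofReal_le_ofReal
        have e1 : ((t-s)/2) ^ (α - 1) * (((t-s)/2) ^ β / β)
            = (1/β) * ((t-s)/2) ^ (α + β - 1) := by
          rw [← mul_div_assoc, ← Real.rpow_add hx, show α - 1 + β = α + β - 1 by ring]
          ring
        have e2 : ((t-s)/2) ^ (β - 1) * (((t-s)/2) ^ α / α)
            = (1/α) * ((t-s)/2) ^ (α + β - 1) := by
          rw [← mul_div_assoc, ← Real.rpow_add hx, show β - 1 + α = α + β - 1 by ring]
          ring
        rw [e1, e2]
        have e3 : ((t-s)/2 : ℝ) ^ (α + β - 1) ≤ 2 * (t - s) ^ (α + β - 1) := by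
          rw [div_eq_mul_one_div, Real.mul_rpow (by linarith) (by norm_num)]
          have : ((1:ℝ)/2) ^ (α + β - 1) ≤ (1/2 : ℝ) ^ (-1 : ℝ) :=
            Real.rpow_le_rpow_of_exponent_ge (by norm_num) (by norm_num) (by linarith)
          rw [Real.rpow_neg_one] at this
          calc (t-s) ^ (α+β-1) * ((1:ℝ)/2) ^ (α+β-1)
              ≤ (t-s) ^ (α+β-1) * 2 := by
                apply mul_le_mul_of_nonneg_left _ (Real.rpow_nonneg (by linarith) _)
                simpa using this
            _ = 2 * (t-s) ^ (α+β-1) := mul_comm _ _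
        calc (1/β) * ((t-s)/2) ^ (α+β-1) + (1/α) * ((t-s)/2) ^ (α+β-1)
            ≤ (1/β) * (2 * (t-s) ^ (α+β-1)) + (1/α) * (2 * (t-s) ^ (α+β-1)) := by
              gcongr
          _ = (2/α + 2/β) * (t-s) ^ (α+β-1) := by ring

lemma sg_lintC (α β t : ℝ) (G : ℝ → ENNReal) (hG : Measurable G) :
    ∫⁻ r in Set.Ioo 0 t, ENNReal.ofReal ((t - r) ^ (α - 1)) *
        ∫⁻ s in Set.Ioo 0 r, ENNReal.ofReal ((r - s) ^ (β - 1)) * G s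
      = ∫⁻ s in Set.Ioo 0 t,
          (∫⁻ r in Set.Ioo s t, ENNReal.ofReal ((t - r) ^ (α - 1) * (r - s) ^ (β - 1))) * G s := by
  set S : Set (ℝ × ℝ) := {p | 0 < p.2 ∧ p.2 < p.1 ∧ p.1 < t} with hS
  have hSm : MeasurableSet S := by
    have : S = {p : ℝ × ℝ | 0 < p.2} ∩ {p | p.2 < p.1} ∩ {p | p.1 < t} := by
      ext p; simp [hS, and_assoc]
    rw [this]
    exact ((measurableSet_lt measurable_const measurable_snd).inter
      (measurableSet_lt measurable_snd measurable_fst)).inter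
      (measurableSet_lt measurable_fst measurable_const)
  set W : ℝ × ℝ → ENNReal := S.indicator
    (fun p => ENNReal.ofReal ((t - p.1) ^ (α - 1)) * (ENNReal.ofReal ((p.1 - p.2) ^ (β - 1)) * G p.2))
    with hW
  have hWm : Measurable W := by
    apply Measurable.indicator _ hSm
    fun_prop
  have hL : ∫⁻ r in Set.Ioo 0 t, ENNReal.ofReal ((t - r) ^ (α - 1)) *
      ∫⁻ s in Set.Ioo 0 r, ENNReal.ofReal ((r - s) ^ (β - 1)) * G s
      = ∫⁻ r, ∫⁻ s, W (r, s) := by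
    have h1 : ∀ r, ∫⁻ s, W (r, s)
        = Set.indicator (Set.Ioo 0 t) (fun r => ENNReal.ofReal ((t - r) ^ (α - 1)) *
            ∫⁻ s in Set.Ioo 0 r, ENNReal.ofReal ((r - s) ^ (β - 1)) * G s) r := by
      intro r
      by_cases hr : r ∈ Set.Ioo 0 t
      · rw [Set.indicator_of_mem hr]
        have : (fun s => W (r, s)) = (Set.Ioo 0 r).indicator
            (fun s => ENNReal.ofReal ((t - r) ^ (α - 1)) *
              (ENNReal.ofReal ((r - s) ^ (β - 1)) * G s)) := by
          funext s
          by_cases hs : s ∈ Set.Ioo 0 r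
          · rw [Set.indicator_of_mem hs, hW,
              Set.indicator_of_mem (show (r, s) ∈ S from ⟨hs.1, hs.2, hr.2⟩)]
          · rw [Set.indicator_of_notMem hs, hW, Set.indicator_of_notMem]
            intro hmem
            exact hs ⟨hmem.1, hmem.2.1⟩
        rw [this, lintegral_indicator measurableSet_Ioo,
          lintegral_const_mul' _ _ ENNReal.ofReal_ne_top]
      · rw [Set.indicator_of_notMem hr]
        have : (fun s => W (r, s)) = fun _ => 0 := by
          funext s
          rw [hW, Set.indicator_of_notMem]
          intro hmem
          exact hr ⟨lt_trans hmem.1 hmem.2.1, hmem.2.2⟩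
        rw [this]; simp
    rw [← lintegral_indicator measurableSet_Ioo]
    congr 1
    funext r
    exact (h1 r).symm
  have hR : ∫⁻ s in Set.Ioo 0 t,
      (∫⁻ r in Set.Ioo s t, ENNReal.ofReal ((t - r) ^ (α - 1) * (r - s) ^ (β - 1))) * G s
      = ∫⁻ s, ∫⁻ r, W (r, s) := by
    have h1 : ∀ s, ∫⁻ r, W (r, s)
        = Set.indicator (Set.Ioo 0 t) (fun s =>
            (∫⁻ r in Set.Ioo s t, ENNReal.ofReal ((t - r) ^ (α - 1) * (r - s) ^ (β - 1))) * G s) s := by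
      intro s
      by_cases hs : s ∈ Set.Ioo 0 t
      · rw [Set.indicator_of_mem hs]
        have : (fun r => W (r, s)) = (Set.Ioo s t).indicator
            (fun r => ENNReal.ofReal ((t - r) ^ (α - 1) * (r - s) ^ (β - 1)) * G s) := by
          funext r
          by_cases hr : r ∈ Set.Ioo s t
          · rw [Set.indicator_of_mem hr, hW,
              Set.indicator_of_mem (show (r, s) ∈ S from ⟨hs.1, hr.1, hr.2⟩)]
            have hnn : 0 ≤ (t - r) ^ (α - 1) := Real.rpow_nonneg (by linarith [hr.2]) _
            rw [ENNReal.ofReal_mul hnn, mul_assoc]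
          · rw [Set.indicator_of_notMem hr, hW, Set.indicator_of_notMem]
            intro hmem
            exact hr ⟨hmem.2.1, hmem.2.2⟩
        rw [this, lintegral_indicator measurableSet_Ioo,
          lintegral_mul_const _ (by fun_prop)]
      · rw [Set.indicator_of_notMem hs]
        have : (fun r => W (r, s)) = fun _ => 0 := by
          funext r
          rw [hW, Set.indicator_of_notMem]
          intro hmem
          exact hs ⟨hmem.1, lt_trans hmem.2.1 hmem.2.2⟩
        rw [this]; simp
    rw [← lintegral_indicator measurableSet_Ioo]
    congr 1
    funext s
    exact (h1 s).symm
  rw [hL, hR]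
  exact lintegral_lintegral_swap (by
    have : Function.uncurry (fun r s => W (r, s)) = W := rfl
    rw [this]
    exact hWm.aemeasurable)

lemma sg_step (T : ℝ) (hT : 0 < T) (f : ℝ → ℝ) (G : ℝ → ENNReal) (hG : Measurable G)
    (hfG : ∀ᵐ r ∂(volume.restrict (Set.Icc 0 T)), G r = ENNReal.ofReal (f r))
    (α β a b a' b' : ℝ) (hα : 0 < α) (hα1 : α ≤ 1) (hβ : 0 < β) (hβ1 : β ≤ 1)
    (ha : 0 < a) (hb : 0 < b) (ha' : 0 < a') (hb' : 0 < b')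
    (hP : ∀ t ∈ Set.Icc (0:ℝ) T, ENNReal.ofReal (f t) ≤ ENNReal.ofReal a +
      ENNReal.ofReal b * ∫⁻ r in Set.Ioo 0 t, ENNReal.ofReal ((t - r) ^ (α - 1)) * G r)
    (hQ : ∀ t ∈ Set.Icc (0:ℝ) T, ENNReal.ofReal (f t) ≤ ENNReal.ofReal a' +
      ENNReal.ofReal b' * ∫⁻ r in Set.Ioo 0 t, ENNReal.ofReal ((t - r) ^ (β - 1)) * G r) :
    ∃ A B : ℝ, 0 < A ∧ 0 < B ∧ ∀ t ∈ Set.Icc (0:ℝ) T, ENNReal.ofReal (f t) ≤ ENNReal.ofReal A +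
      ENNReal.ofReal B * ∫⁻ r in Set.Ioo 0 t,
        ENNReal.ofReal ((t - r) ^ (min (α + β) 1 - 1)) * G r := by
  set δ : ℝ := min (α + β) 1 with hδ
  have hδpos : 0 < δ := lt_min (by linarith) one_pos
  have hδle : δ ≤ α + β := min_le_left _ _
  have he : 0 ≤ α + β - δ := by linarith
  set C : ℝ := 2 / α + 2 / β with hC
  have hCpos : 0 < C := by positivity
  set D : ℝ := max 1 (T ^ (α + β - δ)) with hD
  have hDpos : (0:ℝ) < D := lt_of_lt_of_le one_pos (le_max_left _ _)
  refine ⟨a + b * a' * (T ^ α / α), b * b' * (C * D), by positivity, by positivity, ?_⟩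
  intro t ht
  rcases eq_or_lt_of_le ht.1 with h0 | h0
  · -- t = 0
    have : Set.Ioo (0:ℝ) t = ∅ := by rw [← h0]; simp
    calc ENNReal.ofReal (f t) ≤ ENNReal.ofReal a +
        ENNReal.ofReal b * ∫⁻ r in Set.Ioo 0 t, ENNReal.ofReal ((t - r) ^ (α - 1)) * G r :=
          hP t ht
      _ = ENNReal.ofReal a := by rw [this]; simp
      _ ≤ _ := by
          have hnn : (0:ℝ) ≤ b * a' * (T ^ α / α) := by positivity
          exact le_add_of_le_of_nonneg (ENNReal.ofReal_le_ofReal (by linarith)) (zero_le)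
  · -- 0 < t
    have htT : t ≤ T := ht.2
    -- a.e. bound for G on Ioo 0 t
    have hae : ∀ᵐ r ∂(volume.restrict (Set.Ioo 0 t)),
        ENNReal.ofReal ((t - r) ^ (α - 1)) * G r ≤ ENNReal.ofReal ((t - r) ^ (α - 1)) *
          (ENNReal.ofReal a' + ENNReal.ofReal b' *
            ∫⁻ s in Set.Ioo 0 r, ENNReal.ofReal ((r - s) ^ (β - 1)) * G s) := by
      have hsub : Set.Ioo (0:ℝ) t ⊆ Set.Icc 0 T := fun r hr => ⟨hr.1.le, hr.2.le.trans htT⟩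
      filter_upwards [ae_restrict_of_ae_restrict_of_subset hsub hfG,
        ae_restrict_mem measurableSet_Ioo] with r hGr hr
      rw [hGr]
      exact mul_le_mul_right (hQ r ⟨hr.1.le, hr.2.le.trans htT⟩) _
    have key : ∫⁻ r in Set.Ioo 0 t, ENNReal.ofReal ((t - r) ^ (α - 1)) * G r ≤
        ENNReal.ofReal a' * ENNReal.ofReal (T ^ α / α) +
        ENNReal.ofReal b' * (ENNReal.ofReal (C * D) *
          ∫⁻ r in Set.Ioo 0 t, ENNReal.ofReal ((t - r) ^ (δ - 1)) * G r) := by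
      calc ∫⁻ r in Set.Ioo 0 t, ENNReal.ofReal ((t - r) ^ (α - 1)) * G r
          ≤ ∫⁻ r in Set.Ioo 0 t, ENNReal.ofReal ((t - r) ^ (α - 1)) *
              (ENNReal.ofReal a' + ENNReal.ofReal b' *
                ∫⁻ s in Set.Ioo 0 r, ENNReal.ofReal ((r - s) ^ (β - 1)) * G s) :=
            lintegral_mono_ae hae
        _ = ∫⁻ r in Set.Ioo 0 t, (ENNReal.ofReal a' * ENNReal.ofReal ((t - r) ^ (α - 1)) +
              ENNReal.ofReal b' * (ENNReal.ofReal ((t - r) ^ (α - 1)) *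
                ∫⁻ s in Set.Ioo 0 r, ENNReal.ofReal ((r - s) ^ (β - 1)) * G s)) := by
            apply lintegral_congr; intro r; ring
        _ = ENNReal.ofReal a' * (∫⁻ r in Set.Ioo 0 t, ENNReal.ofReal ((t - r) ^ (α - 1))) +
            ENNReal.ofReal b' * ∫⁻ r in Set.Ioo 0 t, ENNReal.ofReal ((t - r) ^ (α - 1)) *
              ∫⁻ s in Set.Ioo 0 r, ENNReal.ofReal ((r - s) ^ (β - 1)) * G s := by
            rw [lintegral_add_left (by fun_prop), lintegral_const_mul' _ _ ENNReal.ofReal_ne_top,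
              lintegral_const_mul' _ _ ENNReal.ofReal_ne_top]
        _ ≤ ENNReal.ofReal a' * ENNReal.ofReal (T ^ α / α) +
            ENNReal.ofReal b' * (ENNReal.ofReal (C * D) *
              ∫⁻ r in Set.Ioo 0 t, ENNReal.ofReal ((t - r) ^ (δ - 1)) * G r) := by
            gcongr
            · -- kernel integral bound
              rw [setLIntegral_congr Ioo_ae_eq_Ioc, sg_lintA α 0 t hα h0.le]
              apply ENNReal.ofReal_le_ofReal
              rw [sub_zero]
              gcongr
            · -- double integral bound
              rw [sg_lintC α β t G hG,
                ← lintegral_const_mul' _ _ ENNReal.ofReal_ne_top]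
              apply setLIntegral_mono (by fun_prop)
              intro s hs
              rw [← mul_assoc]
              apply mul_le_mul_left
              have hts : (0:ℝ) < t - s := by linarith [hs.2]
              have htsT : t - s ≤ T := by linarith [hs.1, htT]
              calc ∫⁻ r in Set.Ioo s t, ENNReal.ofReal ((t - r) ^ (α - 1) * (r - s) ^ (β - 1))
                  ≤ ENNReal.ofReal (C * (t - s) ^ (α + β - 1)) := sg_lintB α β s t hα hα1 hβ hβ1 hs.2
                _ ≤ ENNReal.ofReal (C * D * (t - s) ^ (δ - 1)) := by
                    apply ENNReal.ofReal_le_ofReal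
                    have hsplit : (t - s) ^ (α + β - 1) = (t - s) ^ (δ - 1) * (t - s) ^ (α + β - δ) := by
                      rw [← Real.rpow_add hts, show δ - 1 + (α + β - δ) = α + β - 1 by ring]
                    have hDle : (t - s) ^ (α + β - δ) ≤ D := by
                      rcases le_or_gt (t - s) 1 with h1 | h1
                      · exact le_trans (Real.rpow_le_one hts.le h1 he) (le_max_left _ _)
                      · exact le_trans (Real.rpow_le_rpow hts.le htsT he) (le_max_right _ _)
                    rw [hsplit]
                    calc C * ((t - s) ^ (δ - 1) * (t - s) ^ (α + β - δ))
                        ≤ C * ((t - s) ^ (δ - 1) * D) := by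
                          have := Real.rpow_nonneg hts.le (δ - 1)
                          gcongr
                      _ = C * D * (t - s) ^ (δ - 1) := by ring
                _ = ENNReal.ofReal (C * D) * ENNReal.ofReal ((t - s) ^ (δ - 1)) := by
                    rw [← ENNReal.ofReal_mul (by positivity)]
    calc ENNReal.ofReal (f t) ≤ ENNReal.ofReal a +
        ENNReal.ofReal b * ∫⁻ r in Set.Ioo 0 t, ENNReal.ofReal ((t - r) ^ (α - 1)) * G r :=
          hP t ht
      _ ≤ ENNReal.ofReal a + ENNReal.ofReal b *
          (ENNReal.ofReal a' * ENNReal.ofReal (T ^ α / α) +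
           ENNReal.ofReal b' * (ENNReal.ofReal (C * D) *
             ∫⁻ r in Set.Ioo 0 t, ENNReal.ofReal ((t - r) ^ (δ - 1)) * G r)) := by gcongr
      _ = ENNReal.ofReal a + (ENNReal.ofReal (b * (a' * (T ^ α / α))) +
            ENNReal.ofReal (b * (b' * (C * D))) *
              ∫⁻ r in Set.Ioo 0 t, ENNReal.ofReal ((t - r) ^ (δ - 1)) * G r) := by
          rw [mul_add, ← ENNReal.ofReal_mul ha'.le, ← ENNReal.ofReal_mul hb.le,
            ← mul_assoc (ENNReal.ofReal b'), ← ENNReal.ofReal_mul hb'.le,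
            ← mul_assoc (ENNReal.ofReal b), ← ENNReal.ofReal_mul hb.le]
      _ = _ := by
          rw [← add_assoc, ← ENNReal.ofReal_add ha.le (by positivity),
            show a + b * (a' * (T ^ α / α)) = a + b * a' * (T ^ α / α) by ring,
            show b * (b' * (C * D)) = b * b' * (C * D) by ring]

/-- A Grönwall-type inequality with singular kernel `(t-r)^{-γ}`. -/
theorem singular_gronwall
    (γ T c : ℝ) (hγ : γ ∈ Set.Ioo (0:ℝ) 1) (hT : 0 < T) (hc : 0 < c)
    (f : ℝ → ℝ) (hf_nonneg : ∀ t ∈ Set.Icc (0:ℝ) T, 0 ≤ f t)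
    (hf_int : IntegrableOn f (Set.Icc (0:ℝ) T))
    (hker_int : ∀ t ∈ Set.Icc (0:ℝ) T,
      IntervalIntegrable (fun r => (t - r) ^ (-γ) * f r) volume 0 t)
    (hf_bound : ∀ t ∈ Set.Icc (0:ℝ) T,
      f t ≤ c + c * ∫ r in (0:ℝ)..t, (t - r) ^ (-γ) * f r) :
    ∃ c₁ c₂ : ℝ, 0 < c₁ ∧ 0 < c₂ ∧
      ∀ t ∈ Set.Icc (0:ℝ) T, f t ≤ c₁ * Real.exp (c₂ * t) := by
  obtain ⟨hγ0, hγ1⟩ := hγ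
  have hmeas : AEMeasurable (fun r => ENNReal.ofReal (f r))
      (volume.restrict (Set.Icc (0:ℝ) T)) := hf_int.aemeasurable.ennreal_ofReal
  set G : ℝ → ENNReal := hmeas.mk _ with hGdef
  have hG : Measurable G := hmeas.measurable_mk
  have hfG : ∀ᵐ r ∂(volume.restrict (Set.Icc (0:ℝ) T)), G r = ENNReal.ofReal (f r) :=
    hmeas.ae_eq_mk.symm
  -- base case of the iteration
  have base : ∀ t ∈ Set.Icc (0:ℝ) T, ENNReal.ofReal (f t) ≤ ENNReal.ofReal c +
      ENNReal.ofReal c * ∫⁻ r in Set.Ioo 0 t,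
        ENNReal.ofReal ((t - r) ^ ((1 - γ) - 1)) * G r := by
    intro t ht
    have hI : 0 ≤ ∫ r in (0:ℝ)..t, (t - r) ^ (-γ) * f r :=
      intervalIntegral.integral_nonneg ht.1 (fun u hu =>
        mul_nonneg (Real.rpow_nonneg (by linarith [hu.2]) _)
          (hf_nonneg u ⟨hu.1, le_trans hu.2 ht.2⟩))
    have hIeq : ENNReal.ofReal (∫ r in (0:ℝ)..t, (t - r) ^ (-γ) * f r)
        = ∫⁻ r in Set.Ioo 0 t, ENNReal.ofReal ((t - r) ^ ((1 - γ) - 1)) * G r := by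
      rw [intervalIntegral.integral_of_le ht.1,
        ofReal_integral_eq_lintegral_ofReal (hker_int t ht).1
          (ae_restrict_of_forall_mem measurableSet_Ioc (fun u hu =>
            mul_nonneg (Real.rpow_nonneg (by linarith [hu.2]) _)
              (hf_nonneg u ⟨hu.1.le, hu.2.trans ht.2⟩))),
        ← setLIntegral_congr (Ioo_ae_eq_Ioc (a := (0:ℝ)) (b := t))]
      apply lintegral_congr_ae
      have hsub : Set.Ioo (0:ℝ) t ⊆ Set.Icc 0 T := fun r hr => ⟨hr.1.le, hr.2.le.trans ht.2⟩
      filter_upwards [ae_restrict_of_ae_restrict_of_subset hsub hfG,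
        ae_restrict_mem measurableSet_Ioo] with r hGr hr
      rw [ENNReal.ofReal_mul (Real.rpow_nonneg (by linarith [hr.2]) _), hGr,
        show (1:ℝ) - γ - 1 = -γ by ring]
    calc ENNReal.ofReal (f t) ≤ ENNReal.ofReal (c + c * ∫ r in (0:ℝ)..t, (t - r) ^ (-γ) * f r) :=
        ENNReal.ofReal_le_ofReal (hf_bound t ht)
      _ = ENNReal.ofReal c + ENNReal.ofReal c *
          ENNReal.ofReal (∫ r in (0:ℝ)..t, (t - r) ^ (-γ) * f r) := by
          rw [ENNReal.ofReal_add hc.le (mul_nonneg hc.le hI), ENNReal.ofReal_mul hc.le]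
      _ = _ := by rw [hIeq]
  -- iteration
  have hQQ : ∀ n : ℕ, ∃ a b : ℝ, 0 < a ∧ 0 < b ∧ ∀ t ∈ Set.Icc (0:ℝ) T,
      ENNReal.ofReal (f t) ≤ ENNReal.ofReal a + ENNReal.ofReal b *
        ∫⁻ r in Set.Ioo 0 t,
          ENNReal.ofReal ((t - r) ^ (min ((2:ℝ) ^ n * (1 - γ)) 1 - 1)) * G r := by
    intro n
    induction n with
    | zero =>
      refine ⟨c, c, hc, hc, ?_⟩
      have he : min ((2:ℝ) ^ (0:ℕ) * (1 - γ)) 1 = 1 - γ := by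
        rw [pow_zero, one_mul]; exact min_eq_left (by linarith)
      rw [he]; exact base
    | succ n ih =>
      obtain ⟨a, b, ha, hb, hP⟩ := ih
      set αn := min ((2:ℝ) ^ n * (1 - γ)) 1 with hαdef
      have hαn : 0 < αn := lt_min (mul_pos (pow_pos two_pos n) (by linarith)) one_pos
      have hαn1 : αn ≤ 1 := min_le_right _ _
      obtain ⟨A, B, hA, hB, hstep⟩ := sg_step T hT f G hG hfG αn αn a b a b
        hαn hαn1 hαn hαn1 ha hb ha hb hP hP
      refine ⟨A, B, hA, hB, ?_⟩
      have hmin : min (αn + αn) 1 = min ((2:ℝ) ^ (n + 1) * (1 - γ)) 1 := by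
        rcases le_or_gt ((2:ℝ) ^ n * (1 - γ)) 1 with h | h
        · rw [hαdef, min_eq_left h, show (2:ℝ) ^ (n+1) * (1-γ) = 2 ^ n * (1-γ) + 2 ^ n * (1-γ) by ring]
        · have e : αn = 1 := min_eq_right h.le
          rw [e, min_eq_right (by norm_num), min_eq_right (by
            rw [show (2:ℝ) ^ (n+1) * (1-γ) = 2 * (2 ^ n * (1-γ)) by ring]; linarith)]
      rw [← hmin]; exact hstep
  obtain ⟨n, hn⟩ := pow_unbounded_of_one_lt (1 / (1 - γ)) (one_lt_two (α := ℝ))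
  have h1 : min ((2:ℝ) ^ n * (1 - γ)) 1 = 1 := by
    apply min_eq_right
    rw [div_lt_iff₀ (by linarith)] at hn
    nlinarith
  obtain ⟨a, b, ha, hb, hP⟩ := hQQ n
  rw [h1] at hP
  simp only [sub_self, Real.rpow_zero, ENNReal.ofReal_one, one_mul] at hP
  set J := ∫ r in Set.Icc (0:ℝ) T, f r with hJdef
  have hJ0 : 0 ≤ J := setIntegral_nonneg measurableSet_Icc hf_nonneg
  have hItot : ∀ t ∈ Set.Icc (0:ℝ) T, (∫⁻ r in Set.Ioo 0 t, G r) ≤ ENNReal.ofReal J := by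
    intro t ht
    calc ∫⁻ r in Set.Ioo 0 t, G r ≤ ∫⁻ r in Set.Icc 0 T, G r :=
        lintegral_mono_set (fun r hr => ⟨hr.1.le, hr.2.le.trans ht.2⟩)
      _ = ∫⁻ r in Set.Icc 0 T, ENNReal.ofReal (f r) := lintegral_congr_ae hfG
      _ = ENNReal.ofReal J := (ofReal_integral_eq_lintegral_ofReal hf_int
          (ae_restrict_of_forall_mem measurableSet_Icc hf_nonneg)).symm
  refine ⟨a + b * J, 1, by positivity, one_pos, ?_⟩
  intro t ht
  have h2 : ENNReal.ofReal (f t) ≤ ENNReal.ofReal a + ENNReal.ofReal b * ENNReal.ofReal J := by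
    refine (hP t ht).trans ?_
    gcongr
    exact hItot t ht
  have h3 : f t ≤ a + b * J := by
    rw [← ENNReal.ofReal_mul hb.le, ← ENNReal.ofReal_add ha.le (by positivity)] at h2
    exact (ENNReal.ofReal_le_ofReal_iff (by positivity)).mp h2
  calc f t ≤ a + b * J := h3
    _ ≤ (a + b * J) * Real.exp (1 * t) :=
        le_mul_of_one_le_right (by positivity) (by rw [one_mul]; exact Real.one_le_exp ht.1)
end

section
/- Let γ ∈ (0,1), T > 0 and c > 0. Suppose f : [0,T] → [0,∞) is Lebesgue-integrable on [0,T] and satisfies f(t) ≤ c + c ∫₀^t (t−r)^{−γ} f(r) dr for all t ∈ [0,T]. Then there exist constants C₁, C₂ > 0, depending only on c, γ and T, such that f(t) ≤ C₁ + C₂ ∫₀^t f(u) du for all t ∈ [0,T]. -/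
open MeasureTheory Set

/-- lintegral of the left kernel `(b - r)^e` over `Ioc a b`. -/
lemma lint_ker_left {a b e : ℝ} (hab : a ≤ b) (he : -1 < e) :
    ∫⁻ r in Ioc a b, ENNReal.ofReal ((b - r) ^ e)
      = ENNReal.ofReal ((b - a) ^ (e + 1) / (e + 1)) := by
  have hii : IntervalIntegrable (fun r => (b - r) ^ e) volume a b := by
    have h := (intervalIntegral.intervalIntegrable_rpow' (a := 0) (b := b - a) he).comp_sub_left b
    simpa using h.symm
  have hint : IntegrableOn (fun r => (b - r) ^ e) (Ioc a b) volume :=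
    (intervalIntegrable_iff_integrableOn_Ioc_of_le hab).mp hii
  have hnn : 0 ≤ᶠ[ae (volume.restrict (Ioc a b))] fun r => (b - r) ^ e := by
    filter_upwards [ae_restrict_mem measurableSet_Ioc] with r hr
    exact Real.rpow_nonneg (by linarith [hr.2]) e
  have := ofReal_integral_eq_lintegral_ofReal hint hnn
  rw [← this]
  congr 1
  have h1 : ∫ r in Ioc a b, (b - r) ^ e = ∫ r in a..b, (b - r) ^ e :=
    (intervalIntegral.integral_of_le hab).symm
  rw [h1, intervalIntegral.integral_comp_sub_left (fun x => x ^ e) b]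
  simp only [sub_self]
  rw [integral_rpow (Or.inl he), Real.zero_rpow (by linarith)]
  ring_nf

/-- lintegral of the right kernel `(r - a)^e` over `Ioc a b`. -/
lemma lint_ker_right {a b e : ℝ} (hab : a ≤ b) (he : -1 < e) :
    ∫⁻ r in Ioc a b, ENNReal.ofReal ((r - a) ^ e)
      = ENNReal.ofReal ((b - a) ^ (e + 1) / (e + 1)) := by
  have hii : IntervalIntegrable (fun r => (r - a) ^ e) volume a b := by
    have h := (intervalIntegral.intervalIntegrable_rpow' (a := 0) (b := b - a) he).comp_sub_right a
    simpa using h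
  have hint : IntegrableOn (fun r => (r - a) ^ e) (Ioc a b) volume :=
    (intervalIntegrable_iff_integrableOn_Ioc_of_le hab).mp hii
  have hnn : 0 ≤ᶠ[ae (volume.restrict (Ioc a b))] fun r => (r - a) ^ e := by
    filter_upwards [ae_restrict_mem measurableSet_Ioc] with r hr
    exact Real.rpow_nonneg (by linarith [hr.1]) e
  have := ofReal_integral_eq_lintegral_ofReal hint hnn
  rw [← this]
  congr 1
  have h1 : ∫ r in Ioc a b, (r - a) ^ e = ∫ r in a..b, (r - a) ^ e :=
    (intervalIntegral.integral_of_le hab).symm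
  rw [h1, intervalIntegral.integral_comp_sub_right (fun x => x ^ e) a]
  simp only [sub_self]
  rw [integral_rpow (Or.inl he), Real.zero_rpow (by linarith)]
  ring_nf
noncomputable def Cconv (γ β : ℝ) : ℝ :=
  (1/2 : ℝ) ^ (β + 1 - γ) * (1 / (β + 1) + max 1 ((2:ℝ) ^ β) / (1 - γ))

lemma Cconv_pos {γ β : ℝ} (hγ : γ < 1) (hβ : -1 < β) : 0 < Cconv γ β := by
  apply mul_pos (Real.rpow_pos_of_pos (by norm_num) _)
  have h1 : (0:ℝ) < 1 / (β + 1) := div_pos one_pos (by linarith)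
  have h2 : (0:ℝ) < max 1 ((2:ℝ) ^ β) / (1 - γ) :=
    div_pos (lt_of_lt_of_le one_pos (le_max_left _ _)) (by linarith)
  linarith

lemma conv_ker_bound {γ β s t : ℝ} (hγ0 : 0 < γ) (hγ1 : γ < 1) (hβ : -1 < β)
    (hst : s < t) :
    ∫⁻ r in Ioo s t,
        ENNReal.ofReal ((t - r) ^ (-γ)) * ENNReal.ofReal ((r - s) ^ β)
      ≤ ENNReal.ofReal (Cconv γ β * (t - s) ^ (β + 1 - γ)) := by
  obtain ⟨d, hd⟩ : ∃ d, d = t - s := ⟨_, rfl⟩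
  obtain ⟨m, hm⟩ : ∃ m, m = s + d / 2 := ⟨_, rfl⟩
  have hdpos : 0 < d := by rw [hd]; linarith
  have hhalf : 0 < d / 2 := by linarith
  have hsm : s < m := by rw [hm]; linarith
  have hmt : m < t := by rw [hm, hd]; linarith
  have hms : m - s = d / 2 := by rw [hm]; ring
  have htm : t - m = d / 2 := by rw [hm, hd]; ring
  have hts : t - s = d := hd.symm

  clear hd hm
  have hsub : Ioo s t ⊆ Ioc s m ∪ Ioc m t := by
    intro r hr
    rcases le_or_gt r m with h | h
    · exact Or.inl ⟨hr.1, h⟩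
    · exact Or.inr ⟨h, hr.2.le⟩
  have hdisj : Disjoint (Ioc s m) (Ioc m t) := by
    rw [Set.disjoint_left]
    rintro r ⟨_, h1⟩ ⟨h2, _⟩
    exact absurd h1 (not_le.mpr h2)
  calc ∫⁻ r in Ioo s t,
        ENNReal.ofReal ((t - r) ^ (-γ)) * ENNReal.ofReal ((r - s) ^ β)
      ≤ ∫⁻ r in Ioc s m ∪ Ioc m t,
        ENNReal.ofReal ((t - r) ^ (-γ)) * ENNReal.ofReal ((r - s) ^ β) :=
        lintegral_mono_set hsub
    _ ≤ ENNReal.ofReal (Cconv γ β * (t - s) ^ (β + 1 - γ)) := by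
        rw [lintegral_union measurableSet_Ioc hdisj]
        have hterm1 : ∫⁻ r in Ioc s m,
            ENNReal.ofReal ((t - r) ^ (-γ)) * ENNReal.ofReal ((r - s) ^ β)
            ≤ ENNReal.ofReal ((d/2) ^ (-γ) * ((d/2) ^ (β+1) / (β+1))) := by
          have hmono : ∫⁻ r in Ioc s m,
              ENNReal.ofReal ((t - r) ^ (-γ)) * ENNReal.ofReal ((r - s) ^ β)
              ≤ ∫⁻ r in Ioc s m,
              ENNReal.ofReal ((d/2) ^ (-γ)) * ENNReal.ofReal ((r - s) ^ β) := by
            apply lintegral_mono_ae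
            filter_upwards [ae_restrict_mem measurableSet_Ioc] with r hr
            have hk : (t - r) ^ (-γ) ≤ (d/2) ^ (-γ) := by
              apply Real.rpow_le_rpow_of_nonpos hhalf _ (by linarith)
              have : r ≤ m := hr.2
              linarith [htm]
            exact mul_le_mul_left (ENNReal.ofReal_le_ofReal hk) _
          refine hmono.trans ?_
          rw [lintegral_const_mul' _ _ ENNReal.ofReal_ne_top,
            lint_ker_right hsm.le hβ, hms,
            ← ENNReal.ofReal_mul (Real.rpow_nonneg hhalf.le _)]
        have hterm2 : ∫⁻ r in Ioc m t,
            ENNReal.ofReal ((t - r) ^ (-γ)) * ENNReal.ofReal ((r - s) ^ β)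
            ≤ ENNReal.ofReal (((d/2) ^ β * max 1 ((2:ℝ)^β)) * ((d/2) ^ (1-γ) / (1-γ))) := by
          have hmono : ∫⁻ r in Ioc m t,
              ENNReal.ofReal ((t - r) ^ (-γ)) * ENNReal.ofReal ((r - s) ^ β)
              ≤ ∫⁻ r in Ioc m t,
              ENNReal.ofReal ((d/2) ^ β * max 1 ((2:ℝ)^β)) * ENNReal.ofReal ((t - r) ^ (-γ)) := by
            apply lintegral_mono_ae
            filter_upwards [ae_restrict_mem measurableSet_Ioc] with r hr
            have hrs : d/2 ≤ r - s := by
              have : m < r := hr.1; linarith [hms]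
            have hrs' : r - s ≤ d := by
              have : r ≤ t := hr.2; linarith [hts]
            have hk : (r - s) ^ β ≤ (d/2) ^ β * max 1 ((2:ℝ)^β) := by
              rcases le_or_gt 0 β with hb | hb
              · calc (r - s) ^ β ≤ d ^ β := Real.rpow_le_rpow (by linarith) hrs' hb
                  _ = (d/2) ^ β * (2:ℝ) ^ β := by
                      rw [← Real.mul_rpow (by linarith) (by norm_num)]
                      norm_num
                  _ ≤ (d/2) ^ β * max 1 ((2:ℝ)^β) := by
                      gcongr; exact le_max_right _ _
              · calc (r - s) ^ β ≤ (d/2) ^ β :=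
                    Real.rpow_le_rpow_of_nonpos hhalf hrs hb.le
                  _ ≤ (d/2) ^ β * max 1 ((2:ℝ)^β) :=
                      le_mul_of_one_le_right (Real.rpow_nonneg hhalf.le _) (le_max_left _ _)
            calc ENNReal.ofReal ((t - r) ^ (-γ)) * ENNReal.ofReal ((r - s) ^ β)
                = ENNReal.ofReal ((r - s) ^ β) * ENNReal.ofReal ((t - r) ^ (-γ)) := mul_comm _ _
              _ ≤ _ := mul_le_mul_left (ENNReal.ofReal_le_ofReal hk) _
          refine hmono.trans ?_
          rw [lintegral_const_mul' _ _ ENNReal.ofReal_ne_top,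
            lint_ker_left hmt.le (by linarith : (-1:ℝ) < -γ), htm,
            ← ENNReal.ofReal_mul (by positivity)]
          apply ENNReal.ofReal_le_ofReal
          rw [show -γ + 1 = 1 - γ by ring]
        refine (add_le_add hterm1 hterm2).trans ?_
        have hn1 : (0:ℝ) ≤ (d/2) ^ (-γ) * ((d/2) ^ (β+1) / (β+1)) :=
          mul_nonneg (Real.rpow_nonneg hhalf.le _)
            (div_nonneg (Real.rpow_nonneg hhalf.le _) (by linarith))
        have hn2 : (0:ℝ) ≤ ((d/2) ^ β * max 1 ((2:ℝ)^β)) * ((d/2) ^ (1-γ) / (1-γ)) :=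
          mul_nonneg (mul_nonneg (Real.rpow_nonneg hhalf.le _)
            (le_trans zero_le_one (le_max_left _ _)))
            (div_nonneg (Real.rpow_nonneg hhalf.le _) (by linarith))
        rw [← ENNReal.ofReal_add hn1 hn2]
        apply ENNReal.ofReal_le_ofReal
        have key : ∀ x y : ℝ, (d/2) ^ (x + y) = (d/2) ^ x * (d/2) ^ y :=
          fun x y => Real.rpow_add hhalf x y
        have e1 : (d/2) ^ (-γ) * ((d/2) ^ (β+1) / (β+1))
            = (d/2) ^ (β+1-γ) * (1/(β+1)) := by
          rw [show β + 1 - γ = -γ + (β+1) by ring, key (-γ) (β+1)]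
          generalize ((d:ℝ)/2) ^ (-γ) = P
          generalize ((d:ℝ)/2) ^ (β+1) = Q
          ring
        have e2 : ((d/2) ^ β * max 1 ((2:ℝ)^β)) * ((d/2) ^ (1-γ) / (1-γ))
            = (d/2) ^ (β+1-γ) * (max 1 ((2:ℝ)^β) / (1-γ)) := by
          rw [show β + 1 - γ = β + (1-γ) by ring, key β (1-γ)]
          generalize ((d:ℝ)/2) ^ β = P
          generalize ((d:ℝ)/2) ^ (1-γ) = Q
          generalize (max 1 ((2:ℝ)^β)) = M
          ring
        have e3 : (d/2) ^ (β+1-γ) = (1/2:ℝ) ^ (β+1-γ) * d ^ (β+1-γ) := by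
          rw [show d/2 = (1/2:ℝ) * d by ring] 
          exact Real.mul_rpow (by norm_num) hdpos.le
        rw [e1, e2, e3, Cconv, hts]
        generalize ((1:ℝ)/2) ^ (β+1-γ) = U
        generalize (d:ℝ) ^ (β+1-γ) = V
        generalize (max 1 ((2:ℝ)^β)) = M
        exact le_of_eq (by ring)
lemma double_swap {t γ β : ℝ} {g : ℝ → ℝ} (hg : Measurable g) :
    ∫⁻ r in Ioo 0 t, ENNReal.ofReal ((t - r) ^ (-γ)) *
        ∫⁻ s in Ioo 0 r, ENNReal.ofReal ((r - s) ^ β) * ENNReal.ofReal (g s)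
      = ∫⁻ s in Ioo 0 t, (∫⁻ r in Ioo s t,
          ENNReal.ofReal ((t - r) ^ (-γ)) * ENNReal.ofReal ((r - s) ^ β)) *
          ENNReal.ofReal (g s) := by
  set S : Set (ℝ × ℝ) := {q : ℝ × ℝ | 0 < q.2 ∧ q.2 < q.1 ∧ q.1 < t} with hSdef
  have hS : MeasurableSet S := by
    apply MeasurableSet.inter
    · exact measurableSet_lt measurable_const measurable_snd
    · exact MeasurableSet.inter (measurableSet_lt measurable_snd measurable_fst)
        (measurableSet_lt measurable_fst measurable_const)
  set Φ : ℝ × ℝ → ENNReal := fun q =>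
    S.indicator (fun q => ENNReal.ofReal ((t - q.1) ^ (-γ)) *
      (ENNReal.ofReal ((q.1 - q.2) ^ β) * ENNReal.ofReal (g q.2))) q with hΦ
  have hΦm : Measurable Φ := by
    apply Measurable.indicator _ hS
    apply Measurable.fun_mul
    · apply Measurable.ennreal_ofReal; fun_prop
    · apply Measurable.fun_mul
      · apply Measurable.ennreal_ofReal; fun_prop
      · exact (hg.comp measurable_snd).ennreal_ofReal
  have hL : ∀ r : ℝ, (∫⁻ s, Φ (r, s)) =
      (Ioo (0:ℝ) t).indicator (fun r => ENNReal.ofReal ((t - r) ^ (-γ)) *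
        ∫⁻ s in Ioo 0 r, ENNReal.ofReal ((r - s) ^ β) * ENNReal.ofReal (g s)) r := by
    intro r
    by_cases hr : r ∈ Ioo (0:ℝ) t
    · rw [Set.indicator_of_mem hr]
      have hpt : ∀ s, Φ (r, s) = (Ioo (0:ℝ) r).indicator
          (fun s => ENNReal.ofReal ((t - r) ^ (-γ)) *
            (ENNReal.ofReal ((r - s) ^ β) * ENNReal.ofReal (g s))) s := by
        intro s
        by_cases hs : s ∈ Ioo (0:ℝ) r
        · have hmem : (r, s) ∈ S := ⟨hs.1, hs.2, hr.2⟩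
          simp only [hΦ, Set.indicator_of_mem hmem, Set.indicator_of_mem hs]
        · have hmem : (r, s) ∉ S := by
            rintro ⟨h1, h2, h3⟩; exact hs ⟨h1, h2⟩
          simp only [hΦ, Set.indicator_of_notMem hmem, Set.indicator_of_notMem hs]
      simp_rw [hpt]
      rw [lintegral_indicator measurableSet_Ioo,
        lintegral_const_mul' _ _ ENNReal.ofReal_ne_top]
    · rw [Set.indicator_of_notMem hr]
      have hpt : ∀ s, Φ (r, s) = 0 := by
        intro s
        have hmem : (r, s) ∉ S := by
          rintro ⟨h1, h2, h3⟩; exact hr ⟨lt_trans h1 h2, h3⟩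
        simp only [hΦ, Set.indicator_of_notMem hmem]
      simp [hpt]
  have hR : ∀ s : ℝ, (∫⁻ r, Φ (r, s)) =
      (Ioo (0:ℝ) t).indicator (fun s => (∫⁻ r in Ioo s t,
        ENNReal.ofReal ((t - r) ^ (-γ)) * ENNReal.ofReal ((r - s) ^ β)) *
        ENNReal.ofReal (g s)) s := by
    intro s
    by_cases hs : s ∈ Ioo (0:ℝ) t
    · rw [Set.indicator_of_mem hs]
      have hpt : ∀ r, Φ (r, s) = (Ioo s t).indicator
          (fun r => (ENNReal.ofReal ((t - r) ^ (-γ)) *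
            ENNReal.ofReal ((r - s) ^ β)) * ENNReal.ofReal (g s)) r := by
        intro r
        by_cases hr : r ∈ Ioo s t
        · have hmem : (r, s) ∈ S := ⟨hs.1, hr.1, hr.2⟩
          simp only [hΦ, Set.indicator_of_mem hmem, Set.indicator_of_mem hr]
          ring
        · have hmem : (r, s) ∉ S := by
            rintro ⟨h1, h2, h3⟩; exact hr ⟨h2, h3⟩
          simp only [hΦ, Set.indicator_of_notMem hmem, Set.indicator_of_notMem hr]
      simp_rw [hpt]
      rw [lintegral_indicator measurableSet_Ioo,
        lintegral_mul_const' _ _ ENNReal.ofReal_ne_top]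
    · rw [Set.indicator_of_notMem hs]
      have hpt : ∀ r, Φ (r, s) = 0 := by
        intro r
        have hmem : (r, s) ∉ S := by
          rintro ⟨h1, h2, h3⟩; exact hs ⟨h1, lt_trans h2 h3⟩
        simp only [hΦ, Set.indicator_of_notMem hmem]
      simp [hpt]
  have swap : (∫⁻ r, ∫⁻ s, Φ (r, s)) = ∫⁻ s, ∫⁻ r, Φ (r, s) := by
    have : Function.uncurry (fun r s => Φ (r, s)) = Φ := rfl
    exact lintegral_lintegral_swap (this ▸ hΦm.aemeasurable)
  calc ∫⁻ r in Ioo (0:ℝ) t, ENNReal.ofReal ((t - r) ^ (-γ)) *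
        ∫⁻ s in Ioo 0 r, ENNReal.ofReal ((r - s) ^ β) * ENNReal.ofReal (g s)
      = ∫⁻ r, ∫⁻ s, Φ (r, s) := by
        rw [← lintegral_indicator measurableSet_Ioo]
        exact lintegral_congr fun r => (hL r).symm
    _ = ∫⁻ s, ∫⁻ r, Φ (r, s) := swap
    _ = ∫⁻ s in Ioo (0:ℝ) t, (∫⁻ r in Ioo s t,
          ENNReal.ofReal ((t - r) ^ (-γ)) * ENNReal.ofReal ((r - s) ^ β)) *
          ENNReal.ofReal (g s) := by
        rw [← lintegral_indicator measurableSet_Ioo]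
        exact lintegral_congr fun s => hR s
/-- Reduction of the singular Grönwall hypothesis to a Grönwall inequality with
bounded kernel: iterating the inequality finitely many times removes the
singularity. -/
theorem singular_gronwall_bounded_kernel
    (γ T c : ℝ) (hγ : γ ∈ Set.Ioo (0:ℝ) 1) (hT : 0 < T) (hc : 0 < c)
    (f : ℝ → ℝ) (hf_nonneg : ∀ t ∈ Set.Icc (0:ℝ) T, 0 ≤ f t)
    (hf_int : IntegrableOn f (Set.Icc (0:ℝ) T))
    (hker_int : ∀ t ∈ Set.Icc (0:ℝ) T,
      IntervalIntegrable (fun r => (t - r) ^ (-γ) * f r) volume 0 t)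
    (hf_bound : ∀ t ∈ Set.Icc (0:ℝ) T,
      f t ≤ c + c * ∫ r in (0:ℝ)..t, (t - r) ^ (-γ) * f r) :
    ∃ C₁ C₂ : ℝ, 0 < C₁ ∧ 0 < C₂ ∧
      ∀ t ∈ Set.Icc (0:ℝ) T, f t ≤ C₁ + C₂ * ∫ u in (0:ℝ)..t, f u := by
  obtain ⟨hγ0, hγ1⟩ := hγ
  have hfm : AEMeasurable f (volume.restrict (Icc (0:ℝ) T)) := hf_int.aemeasurable
  set g : ℝ → ℝ := hfm.mk f with hgdef
  have hgm : Measurable g := hfm.measurable_mk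
  have hfg : f =ᵐ[volume.restrict (Icc (0:ℝ) T)] g := hfm.ae_eq_mk
  have hae : ∀ t ∈ Icc (0:ℝ) T, f =ᵐ[volume.restrict (Ioo (0:ℝ) t)] g := by
    intro t ht
    refine hfg.filter_mono (ae_mono (Measure.restrict_mono ?_ le_rfl))
    intro x hx
    rw [Set.mem_Ioo] at hx
    exact Set.mem_Icc.mpr ⟨hx.1.le, hx.2.le.trans ht.2⟩
  -- base inequality in ENNReal form
  have claim0 : ∀ t ∈ Icc (0:ℝ) T, ENNReal.ofReal (f t) ≤
      ENNReal.ofReal c + ENNReal.ofReal c *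
        ∫⁻ r in Ioo 0 t, ENNReal.ofReal ((t - r) ^ (-γ)) * ENNReal.ofReal (g r) := by
    intro t ht
    have hV0 : 0 ≤ ∫ r in (0:ℝ)..t, (t - r) ^ (-γ) * f r := by
      apply intervalIntegral.integral_nonneg ht.1
      intro u hu
      exact mul_nonneg (Real.rpow_nonneg (by linarith [hu.2]) _)
        (hf_nonneg u ⟨hu.1, hu.2.trans ht.2⟩)
    have h1 : ENNReal.ofReal (∫ r in (0:ℝ)..t, (t - r) ^ (-γ) * f r)
        = ∫⁻ r in Ioc (0:ℝ) t, ENNReal.ofReal ((t - r) ^ (-γ) * f r) := by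
      rw [intervalIntegral.integral_of_le ht.1]
      apply ofReal_integral_eq_lintegral_ofReal
        ((intervalIntegrable_iff_integrableOn_Ioc_of_le ht.1).mp (hker_int t ht))
      filter_upwards [ae_restrict_mem measurableSet_Ioc] with r hr
      exact mul_nonneg (Real.rpow_nonneg (by linarith [hr.2]) _)
        (hf_nonneg r ⟨hr.1.le, hr.2.trans ht.2⟩)
    have h2 : ∫⁻ r in Ioc (0:ℝ) t, ENNReal.ofReal ((t - r) ^ (-γ) * f r)
        = ∫⁻ r in Ioo (0:ℝ) t, ENNReal.ofReal ((t - r) ^ (-γ) * f r) :=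
      (setLIntegral_congr Ioo_ae_eq_Ioc).symm
    have h3 : ∫⁻ r in Ioo (0:ℝ) t, ENNReal.ofReal ((t - r) ^ (-γ) * f r)
        = ∫⁻ r in Ioo (0:ℝ) t, ENNReal.ofReal ((t - r) ^ (-γ)) * ENNReal.ofReal (g r) := by
      apply lintegral_congr_ae
      filter_upwards [ae_restrict_mem measurableSet_Ioo, hae t ht] with r hr hgr
      rw [ENNReal.ofReal_mul (Real.rpow_nonneg (by linarith [hr.2]) _), hgr]
    calc ENNReal.ofReal (f t)
        ≤ ENNReal.ofReal (c + c * ∫ r in (0:ℝ)..t, (t - r) ^ (-γ) * f r) :=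
          ENNReal.ofReal_le_ofReal (hf_bound t ht)
      _ = ENNReal.ofReal c + ENNReal.ofReal c *
            ENNReal.ofReal (∫ r in (0:ℝ)..t, (t - r) ^ (-γ) * f r) := by
          rw [ENNReal.ofReal_add hc.le (mul_nonneg hc.le hV0), ENNReal.ofReal_mul hc.le]
      _ = _ := by rw [h1, h2, h3]
  -- main induction
  have main : ∀ k : ℕ, ∃ a b : ℝ, 0 < a ∧ 0 < b ∧ ∀ t ∈ Icc (0:ℝ) T,
      ENNReal.ofReal (f t) ≤ ENNReal.ofReal a + ENNReal.ofReal b *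
        ∫⁻ s in Ioo 0 t, ENNReal.ofReal ((t - s) ^ ((k:ℝ)*(1-γ) - γ)) *
          ENNReal.ofReal (g s) := by
    intro k
    induction k with
    | zero =>
      refine ⟨c, c, hc, hc, ?_⟩
      intro t ht
      simpa using claim0 t ht
    | succ k ih =>
      obtain ⟨a, b, ha, hb, ihb⟩ := ih
      set β : ℝ := (k:ℝ)*(1-γ) - γ with hβdef
      have hk0 : (0:ℝ) ≤ (k:ℝ)*(1-γ) :=
        mul_nonneg (Nat.cast_nonneg k) (by linarith)
      have hβ : -1 < β := by rw [hβdef]; linarith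
      have hexp : ((k+1:ℕ):ℝ)*(1-γ) - γ = β + 1 - γ := by
        rw [hβdef]; push_cast; ring
      have hCc : 0 < Cconv γ β := Cconv_pos hγ1 hβ
      set D : ℝ := T ^ (1-γ) / (1-γ) with hDdef
      have hD : 0 < D := div_pos (Real.rpow_pos_of_pos hT _) (by linarith)
      refine ⟨c + c * D * a, c * b * Cconv γ β, by positivity, by positivity, ?_⟩
      intro t ht
      rw [hexp]
      have hmeasK : Measurable fun r => ENNReal.ofReal ((t - r) ^ (-γ)) := by
        apply Measurable.ennreal_ofReal; fun_prop
      have step1 : ENNReal.ofReal (f t) ≤ ENNReal.ofReal c + ENNReal.ofReal c *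
          ∫⁻ r in Ioo 0 t, ENNReal.ofReal ((t - r) ^ (-γ)) *
            (ENNReal.ofReal a + ENNReal.ofReal b *
              ∫⁻ s in Ioo 0 r, ENNReal.ofReal ((r - s) ^ β) * ENNReal.ofReal (g s)) := by
        refine (claim0 t ht).trans (add_le_add_right (mul_le_mul_right ?_ _) _)
        apply lintegral_mono_ae
        filter_upwards [ae_restrict_mem measurableSet_Ioo, hae t ht] with r hr hgr
        rw [← hgr]
        exact mul_le_mul_right (ihb r ⟨hr.1.le, hr.2.le.trans ht.2⟩) _
      have step2 : ∫⁻ r in Ioo 0 t, ENNReal.ofReal ((t - r) ^ (-γ)) *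
            (ENNReal.ofReal a + ENNReal.ofReal b *
              ∫⁻ s in Ioo 0 r, ENNReal.ofReal ((r - s) ^ β) * ENNReal.ofReal (g s))
          = (∫⁻ r in Ioo 0 t, ENNReal.ofReal ((t - r) ^ (-γ))) * ENNReal.ofReal a
            + ENNReal.ofReal b * ∫⁻ r in Ioo 0 t, ENNReal.ofReal ((t - r) ^ (-γ)) *
              ∫⁻ s in Ioo 0 r, ENNReal.ofReal ((r - s) ^ β) * ENNReal.ofReal (g s) := by
        simp_rw [mul_add, mul_left_comm _ (ENNReal.ofReal b)]
        rw [lintegral_add_left (hmeasK.mul_const _),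
          lintegral_mul_const' _ _ ENNReal.ofReal_ne_top,
          lintegral_const_mul' _ _ ENNReal.ofReal_ne_top]
      have hA : (∫⁻ r in Ioo 0 t, ENNReal.ofReal ((t - r) ^ (-γ)))
          ≤ ENNReal.ofReal D := by
        rw [setLIntegral_congr Ioo_ae_eq_Ioc, lint_ker_left ht.1 (by linarith : (-1:ℝ) < -γ)]
        apply ENNReal.ofReal_le_ofReal
        rw [sub_zero, show -γ + 1 = 1 - γ by ring, hDdef]
        have hrp : t ^ (1-γ) ≤ T ^ (1-γ) :=
          Real.rpow_le_rpow ht.1 ht.2 (by linarith)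
        apply div_le_div_of_nonneg_right hrp ?_ |>.trans_eq rfl
        · linarith
      have hB : ∫⁻ r in Ioo 0 t, ENNReal.ofReal ((t - r) ^ (-γ)) *
            ∫⁻ s in Ioo 0 r, ENNReal.ofReal ((r - s) ^ β) * ENNReal.ofReal (g s)
          ≤ ENNReal.ofReal (Cconv γ β) *
            ∫⁻ s in Ioo 0 t, ENNReal.ofReal ((t - s) ^ (β + 1 - γ)) * ENNReal.ofReal (g s) := by
        rw [double_swap hgm]
        calc ∫⁻ s in Ioo 0 t, (∫⁻ r in Ioo s t,
              ENNReal.ofReal ((t - r) ^ (-γ)) * ENNReal.ofReal ((r - s) ^ β)) *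
              ENNReal.ofReal (g s)
            ≤ ∫⁻ s in Ioo 0 t, ENNReal.ofReal (Cconv γ β * (t - s) ^ (β + 1 - γ)) *
              ENNReal.ofReal (g s) := by
              apply lintegral_mono_ae
              filter_upwards [ae_restrict_mem measurableSet_Ioo] with s hs
              exact mul_le_mul_left (conv_ker_bound hγ0 hγ1 hβ hs.2) _
          _ = _ := by
              simp_rw [ENNReal.ofReal_mul hCc.le, mul_assoc]
              rw [lintegral_const_mul' _ _ ENNReal.ofReal_ne_top]
      calc ENNReal.ofReal (f t)
          ≤ ENNReal.ofReal c + ENNReal.ofReal c *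
            ((∫⁻ r in Ioo 0 t, ENNReal.ofReal ((t - r) ^ (-γ))) * ENNReal.ofReal a
              + ENNReal.ofReal b * ∫⁻ r in Ioo 0 t, ENNReal.ofReal ((t - r) ^ (-γ)) *
                ∫⁻ s in Ioo 0 r, ENNReal.ofReal ((r - s) ^ β) * ENNReal.ofReal (g s)) := by
            rw [← step2]; exact step1
        _ ≤ ENNReal.ofReal c + ENNReal.ofReal c *
            (ENNReal.ofReal D * ENNReal.ofReal a
              + ENNReal.ofReal b * (ENNReal.ofReal (Cconv γ β) *
                ∫⁻ s in Ioo 0 t, ENNReal.ofReal ((t - s) ^ (β + 1 - γ)) *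
                  ENNReal.ofReal (g s))) := by
            gcongr
        _ = ENNReal.ofReal (c + c * D * a) + ENNReal.ofReal (c * b * Cconv γ β) *
            ∫⁻ s in Ioo 0 t, ENNReal.ofReal ((t - s) ^ (β + 1 - γ)) *
              ENNReal.ofReal (g s) := by
            rw [ENNReal.ofReal_add hc.le (by positivity),
              ENNReal.ofReal_mul (by positivity : (0:ℝ) ≤ c * D),
              ENNReal.ofReal_mul hc.le,
              ENNReal.ofReal_mul (by positivity : (0:ℝ) ≤ c * b),
              ENNReal.ofReal_mul hc.le]
            ring
  -- choose k large enough
  set K : ℕ := ⌈γ / (1-γ)⌉₊ with hKdef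
  have hKe : 0 ≤ (K:ℝ)*(1-γ) - γ := by
    have h1 : γ / (1-γ) ≤ (K:ℝ) := Nat.le_ceil _
    have h2 : γ / (1-γ) * (1-γ) ≤ (K:ℝ) * (1-γ) := by
      apply mul_le_mul_of_nonneg_right h1 (by linarith)
    rw [div_mul_cancel₀ _ (by linarith : (1:ℝ)-γ ≠ 0)] at h2
    linarith
  obtain ⟨a, b, ha, hb, hbound⟩ := main K
  set e : ℝ := (K:ℝ)*(1-γ) - γ with hedef
  have hTe : 0 < T ^ e := Real.rpow_pos_of_pos hT _
  refine ⟨a, b * T ^ e, ha, by positivity, ?_⟩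
  intro t ht
  have hIoosub : Ioo (0:ℝ) t ⊆ Icc (0:ℝ) T :=
    fun x hx => ⟨hx.1.le, hx.2.le.trans ht.2⟩
  have hLf : ∫⁻ s in Ioo 0 t, ENNReal.ofReal (g s)
      = ENNReal.ofReal (∫ s in Ioo (0:ℝ) t, f s) := by
    have h1 : ∫⁻ s in Ioo 0 t, ENNReal.ofReal (g s)
        = ∫⁻ s in Ioo 0 t, ENNReal.ofReal (f s) := by
      apply lintegral_congr_ae
      filter_upwards [hae t ht] with s hgs
      rw [hgs]
    rw [h1]
    symm
    apply ofReal_integral_eq_lintegral_ofReal (hf_int.mono_set hIoosub)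
    filter_upwards [ae_restrict_mem measurableSet_Ioo] with s hs
    exact hf_nonneg s (hIoosub hs)
  have hIf0 : 0 ≤ ∫ s in Ioo (0:ℝ) t, f s := by
    apply setIntegral_nonneg measurableSet_Ioo
    intro s hs
    exact hf_nonneg s (hIoosub hs)
  have hmain : ENNReal.ofReal (f t) ≤ ENNReal.ofReal
      (a + b * T ^ e * ∫ s in Ioo (0:ℝ) t, f s) := by
    refine (hbound t ht).trans ?_
    have hker : ∫⁻ s in Ioo 0 t, ENNReal.ofReal ((t - s) ^ e) * ENNReal.ofReal (g s)
        ≤ ENNReal.ofReal (T ^ e) * ∫⁻ s in Ioo 0 t, ENNReal.ofReal (g s) := by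
      rw [← lintegral_const_mul' _ _ ENNReal.ofReal_ne_top]
      apply lintegral_mono_ae
      filter_upwards [ae_restrict_mem measurableSet_Ioo] with s hs
      apply mul_le_mul_left
      apply ENNReal.ofReal_le_ofReal
      apply Real.rpow_le_rpow (by linarith [hs.2]) (by linarith [hs.1, ht.2]) hKe
    calc ENNReal.ofReal a + ENNReal.ofReal b *
          ∫⁻ s in Ioo 0 t, ENNReal.ofReal ((t - s) ^ e) * ENNReal.ofReal (g s)
        ≤ ENNReal.ofReal a + ENNReal.ofReal b *
          (ENNReal.ofReal (T ^ e) * ENNReal.ofReal (∫ s in Ioo (0:ℝ) t, f s)) := by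
          gcongr
          rw [← hLf]
          exact hker
      _ = _ := by
          rw [ENNReal.ofReal_add (le_of_lt ha) (by positivity),
            ENNReal.ofReal_mul (by positivity : (0:ℝ) ≤ b * T ^ e),
            ENNReal.ofReal_mul hb.le]
          ring
  have hft : f t ≤ a + b * T ^ e * ∫ s in Ioo (0:ℝ) t, f s := by
    have := (ENNReal.ofReal_le_ofReal_iff (by positivity)).mp hmain
    linarith [this]
  have hIeq : ∫ s in Ioo (0:ℝ) t, f s = ∫ u in (0:ℝ)..t, f u := by
    rw [intervalIntegral.integral_of_le ht.1, integral_Ioc_eq_integral_Ioo]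
  rw [← hIeq]
  exact hft
end

section
/- Let β : [0,∞) → [0,∞) be locally Lebesgue-integrable, define τ(t) = ∫₀^t β(r) dr and γ(u) = inf{ t ≥ 0 : τ(t) > u } (with inf ∅ = +∞). Then for every measurable h : [0,∞) → [0,∞] and every s ≥ 0: ∫₀^s h(r) β(r) dr = ∫₀^{τ(s)} h(γ(u)) du. -/
open MeasureTheory Set Filter Topology

noncomputable def tcTau (β : ℝ → ℝ) (t : ℝ) : ℝ := ∫ r in (0:ℝ)..t, β r
noncomputable def tcGamma (β : ℝ → ℝ) (u : ℝ) : ℝ :=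
  sInf {t : ℝ | 0 ≤ t ∧ u < tcTau β t}

section aux
variable {β : ℝ → ℝ}

lemma tcInt_Icc (hβ_int : ∀ T : ℝ, 0 ≤ T → IntegrableOn β (Set.Icc (0:ℝ) T))
    {a b : ℝ} (ha : 0 ≤ a) : IntegrableOn β (Set.Icc a b) :=
  (hβ_int (max b 0) (le_max_right _ _)).mono_set (Set.Icc_subset_Icc ha (le_max_left _ _))

lemma tcII (hβ_int : ∀ T : ℝ, 0 ≤ T → IntegrableOn β (Set.Icc (0:ℝ) T))
    {a b : ℝ} (ha : 0 ≤ a) (hb : 0 ≤ b) : IntervalIntegrable β volume a b := by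
  apply IntegrableOn.intervalIntegrable
  rw [Set.uIcc_eq_union]
  exact IntegrableOn.union (tcInt_Icc hβ_int ha) (tcInt_Icc hβ_int hb)

lemma tcTau_zero : tcTau β 0 = 0 := intervalIntegral.integral_same

lemma tcTau_add (hβ_int : ∀ T : ℝ, 0 ≤ T → IntegrableOn β (Set.Icc (0:ℝ) T))
    {a b : ℝ} (ha : 0 ≤ a) (hab : a ≤ b) :
    tcTau β b = tcTau β a + ∫ r in a..b, β r :=
  (intervalIntegral.integral_add_adjacent_intervals (tcII hβ_int le_rfl ha)
    (tcII hβ_int ha (ha.trans hab))).symm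

lemma tcTau_mono (hβ_nonneg : ∀ r, 0 ≤ β r)
    (hβ_int : ∀ T : ℝ, 0 ≤ T → IntegrableOn β (Set.Icc (0:ℝ) T))
    {a b : ℝ} (ha : 0 ≤ a) (hab : a ≤ b) : tcTau β a ≤ tcTau β b := by
  rw [tcTau_add hβ_int ha hab]
  have : 0 ≤ ∫ r in a..b, β r :=
    intervalIntegral.integral_nonneg hab (fun x _ => hβ_nonneg x)
  linarith

lemma tcTau_nonneg (hβ_nonneg : ∀ r, 0 ≤ β r)
    (hβ_int : ∀ T : ℝ, 0 ≤ T → IntegrableOn β (Set.Icc (0:ℝ) T))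
    {t : ℝ} (ht : 0 ≤ t) : 0 ≤ tcTau β t := by
  have := tcTau_mono hβ_nonneg hβ_int le_rfl ht
  rwa [tcTau_zero] at this

lemma tcTau_rc (hβ_int : ∀ T : ℝ, 0 ≤ T → IntegrableOn β (Set.Icc (0:ℝ) T))
    {t : ℝ} (ht : 0 ≤ t) : Tendsto (tcTau β) (𝓝[>] t) (𝓝 (tcTau β t)) := by
  have hI : IntegrableOn β (Set.uIcc (0:ℝ) (t+1)) := by
    rw [Set.uIcc_of_le (by linarith)]
    exact tcInt_Icc hβ_int le_rfl
  have hc : ContinuousOn (tcTau β) (Set.uIcc (0:ℝ) (t+1)) :=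
    intervalIntegral.continuousOn_primitive_interval hI
  have hmem : t ∈ Set.uIcc (0:ℝ) (t+1) := by
    rw [Set.uIcc_of_le (by linarith)]; exact ⟨ht, by linarith⟩
  have hcw : ContinuousWithinAt (tcTau β) (Set.Ioc t (t+1)) t := by
    refine (hc t hmem).mono ?_
    rw [Set.uIcc_of_le (by linarith)]
    exact fun x hx => ⟨ht.trans hx.1.le, hx.2⟩
  have := hcw.tendsto
  rwa [nhdsWithin_Ioc_eq_nhdsGT (lt_add_one t)] at this

lemma tcGamma_le {u t : ℝ} (ht : 0 ≤ t) (hu : u < tcTau β t) : tcGamma β u ≤ t :=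
  csInf_le ⟨0, fun _ hx => hx.1⟩ ⟨ht, hu⟩

lemma tcGamma_nonneg {u : ℝ} (hne : {t : ℝ | 0 ≤ t ∧ u < tcTau β t}.Nonempty) :
    0 ≤ tcGamma β u :=
  le_csInf hne fun _ hx => hx.1

lemma tcLe_tau (hβ_nonneg : ∀ r, 0 ≤ β r)
    (hβ_int : ∀ T : ℝ, 0 ≤ T → IntegrableOn β (Set.Icc (0:ℝ) T))
    {u t : ℝ} (ht : 0 ≤ t) (hne : {t : ℝ | 0 ≤ t ∧ u < tcTau β t}.Nonempty)
    (hle : tcGamma β u ≤ t) : u ≤ tcTau β t := by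
  by_contra hlt
  push_neg at hlt
  have hev : ∀ᶠ x in 𝓝[>] t, tcTau β x < u :=
    (tcTau_rc hβ_int ht).eventually_lt_const hlt
  obtain ⟨x, hx1, hx2⟩ := (hev.and self_mem_nhdsWithin).exists
  have hxg : x ≤ tcGamma β u := by
    refine le_csInf hne fun y hy => ?_
    by_contra hyx
    push_neg at hyx
    have : tcTau β y ≤ tcTau β x := tcTau_mono hβ_nonneg hβ_int hy.1 hyx.le
    linarith [hy.2]
  have : (t : ℝ) < t := lt_of_lt_of_le hx2 (hxg.trans hle)
  exact lt_irrefl _ this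

end aux

/-- Time-change formula: if `τ(t) = ∫₀^t β(r) dr` and
`γ(u) = inf{t ≥ 0 : τ(t) > u}` is its generalized right-continuous inverse,
then `∫₀^s h(r) β(r) dr = ∫₀^{τ(s)} h(γ(u)) du` for every measurable
`h : [0,∞) → [0,∞]`. -/
theorem time_change_formula
    (β : ℝ → ℝ) (hβ_nonneg : ∀ r, 0 ≤ β r)
    (hβ_int : ∀ T : ℝ, 0 ≤ T → IntegrableOn β (Set.Icc (0:ℝ) T))
    (h : ℝ → ENNReal) (hh : Measurable h) (s : ℝ) (hs : 0 ≤ s) :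
    (∫⁻ r in Set.Ioc (0:ℝ) s, h r * ENNReal.ofReal (β r))
      = ∫⁻ u in Set.Ioc (0:ℝ) (∫ r in (0:ℝ)..s, β r),
          h (sInf {t : ℝ | 0 ≤ t ∧ u < ∫ r in (0:ℝ)..t, β r}) := by
  show (∫⁻ r in Set.Ioc (0:ℝ) s, h r * ENNReal.ofReal (β r))
      = ∫⁻ u in Set.Ioc (0:ℝ) (tcTau β s), h (tcGamma β u)
  have hτs : 0 ≤ tcTau β s := tcTau_nonneg hβ_nonneg hβ_int hs
  have hne : ∀ {u : ℝ}, u < tcTau β s → {t : ℝ | 0 ≤ t ∧ u < tcTau β t}.Nonempty :=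
    fun hu => ⟨s, hs, hu⟩
  -- the monotone modification of γ
  set g : ℝ → ℝ := fun u => if u < tcTau β s then tcGamma β u else s with hgdef
  have hg_mono : Monotone g := by
    intro u v huv
    simp only [hgdef]
    by_cases hv : v < tcTau β s
    · have hu : u < tcTau β s := lt_of_le_of_lt huv hv
      rw [if_pos hu, if_pos hv]
      exact csInf_le_csInf ⟨0, fun x hx => hx.1⟩ (hne hv)
        (fun t ht => ⟨ht.1, lt_of_le_of_lt huv ht.2⟩)
    · rw [if_neg hv]
      by_cases hu : u < tcTau β s
      · rw [if_pos hu]; exact tcGamma_le hs hu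
      · rw [if_neg hu]
  have hg_meas : Measurable g := hg_mono.measurable
  -- the two measures agree
  have key : ∀ a b : ℝ, a < b →
      (Measure.map g (volume.restrict (Set.Ioc 0 (tcTau β s)))) (Set.Ioc a b)
        = ((volume.restrict (Set.Ioc 0 s)).withDensity
            (fun r => ENNReal.ofReal (β r))) (Set.Ioc a b) := by
    intro a b hab
    set x : ℝ := min (max a 0) s with hxdef
    set y : ℝ := min (max b 0) s with hydef
    have hx0 : 0 ≤ x := le_min (le_max_right _ _) hs
    have hy0 : 0 ≤ y := le_min (le_max_right _ _) hs
    have hys : y ≤ s := min_le_right _ _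
    have hτx0 : 0 ≤ tcTau β x := tcTau_nonneg hβ_nonneg hβ_int hx0
    have hτys : tcTau β y ≤ tcTau β s := tcTau_mono hβ_nonneg hβ_int hy0 hys
    have hsub1 : Set.Ioo (tcTau β x) (tcTau β y)
        ⊆ g ⁻¹' Set.Ioc a b ∩ Set.Ioc 0 (tcTau β s) := by
      intro u hu
      have hu0 : 0 < u := lt_of_le_of_lt hτx0 hu.1
      have huy : u < tcTau β y := hu.2
      have hus : u < tcTau β s := lt_of_lt_of_le huy hτys
      have hγy : tcGamma β u ≤ y := tcGamma_le hy0 huy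
      have hγ0 : 0 ≤ tcGamma β u := tcGamma_nonneg (hne hus)
      have hγs : tcGamma β u ≤ s := tcGamma_le hs hus
      have hb0 : 0 ≤ b := by
        by_contra hb
        push_neg at hb
        have hy' : y = 0 := by
          rw [hydef, max_eq_right hb.le, min_eq_left hs]
        rw [hy', tcTau_zero] at huy
        linarith
      have hγb : tcGamma β u ≤ b :=
        hγy.trans ((min_le_left _ _).trans (le_of_eq (max_eq_left hb0)))
      have haγ : a < tcGamma β u := by
        by_contra hga
        push_neg at hga
        have hγx : tcGamma β u ≤ x := le_min (hga.trans (le_max_left _ _)) hγs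
        have := tcLe_tau hβ_nonneg hβ_int hx0 (hne hus) hγx
        linarith [hu.1]
      refine ⟨?_, hu0, hus.le⟩
      simp only [Set.mem_preimage, Set.mem_Ioc, hgdef, if_pos hus]
      exact ⟨haγ, hγb⟩
    have hsub2 : g ⁻¹' Set.Ioc a b ∩ Set.Ioc 0 (tcTau β s)
        ⊆ Set.Icc (tcTau β x) (tcTau β y) ∪ {tcTau β s} := by
      rintro u ⟨hpre, hmem⟩
      by_cases hu : u = tcTau β s
      · exact Or.inr hu
      have hus : u < tcTau β s := lt_of_le_of_ne hmem.2 hu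
      have hgu : g u = tcGamma β u := by simp only [hgdef, if_pos hus]
      rw [Set.mem_preimage, hgu, Set.mem_Ioc] at hpre
      have hγs : tcGamma β u ≤ s := tcGamma_le hs hus
      have hγy : tcGamma β u ≤ y :=
        le_min (hpre.2.trans (le_max_left _ _)) hγs
      have huy : u ≤ tcTau β y := tcLe_tau hβ_nonneg hβ_int hy0 (hne hus) hγy
      have hux : tcTau β x ≤ u := by
        by_contra hlt
        push_neg at hlt
        have hγx : tcGamma β u ≤ x := tcGamma_le hx0 hlt
        by_cases ha0 : 0 ≤ a
        · have : tcGamma β u ≤ a := hγx.trans ((min_le_left _ _).trans (le_of_eq (max_eq_left ha0)))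
          linarith [hpre.1]
        · push_neg at ha0
          have hx' : x = 0 := by rw [hxdef, max_eq_right ha0.le, min_eq_left hs]
          rw [hx', tcTau_zero] at hlt
          linarith [hmem.1]
      exact Or.inl ⟨hux, huy⟩
    have hmapLHS : (Measure.map g (volume.restrict (Set.Ioc 0 (tcTau β s)))) (Set.Ioc a b)
        = volume (g ⁻¹' Set.Ioc a b ∩ Set.Ioc 0 (tcTau β s)) := by
      rw [Measure.map_apply hg_meas measurableSet_Ioc,
        Measure.restrict_apply (hg_meas measurableSet_Ioc)]
    have hvol : volume (g ⁻¹' Set.Ioc a b ∩ Set.Ioc 0 (tcTau β s))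
        = ENNReal.ofReal (tcTau β y - tcTau β x) := by
      refine le_antisymm ?_ ?_
      · calc volume (g ⁻¹' Set.Ioc a b ∩ Set.Ioc 0 (tcTau β s))
            ≤ volume (Set.Icc (tcTau β x) (tcTau β y) ∪ {tcTau β s}) := measure_mono hsub2
          _ ≤ volume (Set.Icc (tcTau β x) (tcTau β y)) + volume ({tcTau β s} : Set ℝ) :=
              measure_union_le _ _
          _ = ENNReal.ofReal (tcTau β y - tcTau β x) := by
              rw [Real.volume_Icc, Real.volume_singleton, add_zero]
      · calc ENNReal.ofReal (tcTau β y - tcTau β x)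
            = volume (Set.Ioo (tcTau β x) (tcTau β y)) := (Real.volume_Ioo).symm
          _ ≤ _ := measure_mono hsub1
    have hRHS : ((volume.restrict (Set.Ioc 0 s)).withDensity
          (fun r => ENNReal.ofReal (β r))) (Set.Ioc a b)
        = ENNReal.ofReal (tcTau β y - tcTau β x) := by
      rw [withDensity_apply _ measurableSet_Ioc,
        Measure.restrict_restrict measurableSet_Ioc, Set.Ioc_inter_Ioc]
      by_cases hcase : max a 0 ≤ min b s
      · have hb0 : 0 ≤ b := le_trans (le_max_right a 0) (hcase.trans (min_le_left _ _))
        have hxeq : x = max a 0 := min_eq_left (hcase.trans (min_le_right _ _))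
        have hyeq : y = min b s := by rw [hydef, max_eq_left hb0]
        rw [← hxeq, ← hyeq]
        have hxy : x ≤ y := by rw [hxeq, hyeq]; exact hcase
        have hint : IntegrableOn β (Set.Ioc x y) :=
          (tcInt_Icc hβ_int hx0).mono_set Set.Ioc_subset_Icc_self
        have hδ : tcTau β y - tcTau β x = ∫ r in Set.Ioc x y, β r := by
          rw [tcTau_add hβ_int hx0 hxy, intervalIntegral.integral_of_le hxy]
          ring
        rw [hδ]
        exact (ofReal_integral_eq_lintegral_ofReal hint
          (ae_of_all _ fun r => hβ_nonneg r)).symm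
      · push_neg at hcase
        rw [Set.Ioc_eq_empty (not_lt.mpr hcase.le), Measure.restrict_empty,
          lintegral_zero_measure]
        have hyx : y ≤ x := by
          by_cases hb0 : 0 ≤ b
          · have hyeq : y = min b s := by rw [hydef, max_eq_left hb0]
            rw [hyeq, hxdef]
            exact le_min hcase.le (min_le_right b s)
          · push_neg at hb0
            have : y = 0 := by rw [hydef, max_eq_right hb0.le, min_eq_left hs]
            rw [this]; exact hx0
        have : tcTau β y ≤ tcTau β x := tcTau_mono hβ_nonneg hβ_int hy0 hyx
        exact (ENNReal.ofReal_eq_zero.mpr (by linarith)).symm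
    rw [hmapLHS, hvol, hRHS]
  have hmain : Measure.map g (volume.restrict (Set.Ioc 0 (tcTau β s)))
      = (volume.restrict (Set.Ioc 0 s)).withDensity fun r => ENNReal.ofReal (β r) := by
    refine Measure.ext_of_Ioc' _ _ (fun a b hab => ?_) (fun a b hab => key a b hab)
    rw [Measure.map_apply hg_meas measurableSet_Ioc,
      Measure.restrict_apply (hg_meas measurableSet_Ioc)]
    exact (lt_of_le_of_lt (measure_mono Set.inter_subset_right) measure_Ioc_lt_top).ne
  -- left-hand side as integral against the density measure
  have hβae : AEMeasurable β (volume.restrict (Set.Ioc (0:ℝ) s)) :=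
    ((hβ_int s hs).aestronglyMeasurable.aemeasurable).mono_measure
      (Measure.restrict_mono Set.Ioc_subset_Icc_self le_rfl)
  have hf_ae : AEMeasurable (fun r => ENNReal.ofReal (β r)) (volume.restrict (Set.Ioc (0:ℝ) s)) :=
    ENNReal.measurable_ofReal.comp_aemeasurable hβae
  have hL : (∫⁻ r in Set.Ioc (0:ℝ) s, h r * ENNReal.ofReal (β r))
      = ∫⁻ r, h r ∂((volume.restrict (Set.Ioc 0 s)).withDensity
          fun r => ENNReal.ofReal (β r)) := by
    rw [lintegral_withDensity_eq_lintegral_mul₀ hf_ae hh.aemeasurable]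
    exact lintegral_congr fun r => mul_comm _ _
  -- a.e. identification of g with γ on (0, τ s]
  have h0 : ∀ᵐ u ∂(volume : Measure ℝ), u ≠ tcTau β s := by
    have hset : {u : ℝ | ¬ u ≠ tcTau β s} = {tcTau β s} := by ext u; simp
    rw [ae_iff, hset]
    exact Real.volume_singleton
  have hgγ : (fun u => h (tcGamma β u))
      =ᵐ[volume.restrict (Set.Ioc 0 (tcTau β s))] fun u => h (g u) := by
    filter_upwards [ae_restrict_of_ae h0, ae_restrict_mem measurableSet_Ioc] with u hu1 hu2
    have hus : u < tcTau β s := lt_of_le_of_ne hu2.2 hu1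
    simp only [hgdef, if_pos hus]
  calc (∫⁻ r in Set.Ioc (0:ℝ) s, h r * ENNReal.ofReal (β r))
      = ∫⁻ r, h r ∂((volume.restrict (Set.Ioc 0 s)).withDensity
          fun r => ENNReal.ofReal (β r)) := hL
    _ = ∫⁻ r, h r ∂(Measure.map g (volume.restrict (Set.Ioc 0 (tcTau β s)))) := by
        rw [hmain]
    _ = ∫⁻ u, h (g u) ∂(volume.restrict (Set.Ioc 0 (tcTau β s))) :=
        lintegral_map hh hg_meas
    _ = ∫⁻ u in Set.Ioc (0:ℝ) (tcTau β s), h (tcGamma β u) :=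
        (lintegral_congr_ae hgγ).symm
end
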